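/- arXiv:1011.5941 — 3 statements merged into one kernel-verified Lean document; each statement's English description precedes it below -/
import Mathlib

section
/- Lindström–Gessel–Viennot lemma: Let D be an acyclic directed graph without multiple edges, with edge weights in a commutative ring, and let u = (u₁,…,u_n) and v = (v₁,…,v_n) be n-tuples of vertices. Then Σ_{π ∈ S_n} sgn(π) · F₀(u^π, v) = det[h(u_i, v_j)]_{1≤i,j≤n}, where h(u,v) is the sum of the weights of all directed paths from u to v, F₀(u,v) is the sum of weights of all non-intersecting n-tuples of paths (P₁,…,P_n) with P_i from u_i to v_i, the weight of an n-tuple of paths being the product of the path weights, and u^π = (u_{π(1)},…,u_{π(n)}). -/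
open Finset

/-- `p` is a directed path in the digraph with edge relation `E` from `u` to `v`,
recorded as its (nonempty) list of vertices. -/
def IsPathFrom {V : Type*} (E : V → V → Prop) (u v : V) (p : List V) : Prop :=
  p.Chain' E ∧ p.head? = some u ∧ p.getLast? = some v

/-- The weight of a path: the product of the weights of its edges. -/
def pathWeight {V R : Type*} [CommRing R] (w : V → V → R) (p : List V) : R :=
  (List.zipWith w p p.tail).prod

/-- `h(u,v)`: the generating function of all paths from `u` to `v`. -/
noncomputable def pathGF {V R : Type*} [CommRing R] (E : V → V → Prop) (w : V → V → R)
    (u v : V) : R :=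
  ∑ᶠ p ∈ {p : List V | IsPathFrom E u v p}, pathWeight w p

/-- An `n`-tuple of paths is non-intersecting if no two distinct component paths
share a vertex. -/
def NonIntersecting {V : Type*} {n : ℕ} (P : Fin n → List V) : Prop :=
  ∀ i j : Fin n, i ≠ j → ∀ x, x ∈ P i → x ∉ P j

/-- `F₀(u,v)`: the generating function of non-intersecting `n`-paths from `u` to `v`. -/
noncomputable def nonIntGF {V R : Type*} [CommRing R] (E : V → V → Prop) (w : V → V → R)
    (n : ℕ) (u v : Fin n → V) : R :=
  ∑ᶠ P : {P : Fin n → List V //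
      (∀ i, IsPathFrom E (u i) (v i) (P i)) ∧ NonIntersecting P},
    ∏ i, pathWeight w (P.1 i)

/-!
Expanding the determinant writes it as the signed sum of the weights of all pairs `(σ, P)`, where
`P` is a family of paths from `u ∘ σ` to `v`. On the pairs whose paths intersect, exchange the
initial segments of two paths at a canonically chosen common vertex, the pivot. This multiplies
`σ` by a transposition, keeps the weight, and (since acyclicity makes all paths simple) keeps the
pivot, so it is a sign-reversing involution and these terms cancel. The remaining terms are
exactly the signed non-intersecting generating functions.
-/

section Paths

variable {V R : Type*} {E : V → V → Prop}

theorem isPathFrom_append_cons {a b x : V} {A B : List V}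
    (h : IsPathFrom E a b (A ++ x :: B)) :
    IsPathFrom E a x (A ++ [x]) ∧ IsPathFrom E x b (x :: B) := by
  obtain ⟨hchain, hhead, hlast⟩ := h
  rw [List.Chain', List.isChain_split] at hchain
  refine ⟨⟨hchain.1, ?_, by simp⟩, ⟨hchain.2, rfl, ?_⟩⟩
  · cases A <;> simp_all
  · rwa [List.getLast?_append_cons] at hlast

theorem IsPathFrom.append_cons {a b x : V} {A B : List V}
    (h₁ : IsPathFrom E a x (A ++ [x])) (h₂ : IsPathFrom E x b (x :: B)) :
    IsPathFrom E a b (A ++ x :: B) := by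
  refine ⟨?_, ?_, ?_⟩
  · rw [List.Chain', List.isChain_split]; exact ⟨h₁.1, h₂.1⟩
  · cases A <;> simp_all [IsPathFrom]
  · rw [List.getLast?_append_cons]; exact h₂.2.2

theorem IsPathFrom.nodup (hacyclic : ∀ x p, IsPathFrom E x x p → p.length ≤ 1)
    {a b : V} {p : List V} (h : IsPathFrom E a b p) : p.Nodup := by
  by_contra hdup
  obtain ⟨x, hx⟩ := List.exists_duplicate_iff_not_nodup.2 hdup
  obtain ⟨l₁, l₂, l₃, rfl⟩ : ∃ l₁ l₂ l₃, p = l₁ ++ x :: (l₂ ++ x :: l₃) := by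
    obtain ⟨r₁, r₂, rfl, hx₁, hx₂⟩ := List.cons_sublist_iff.1 (List.duplicate_iff_sublist.1 hx)
    obtain ⟨l₁, l₂, rfl⟩ := List.append_of_mem hx₁
    obtain ⟨l₃, l₄, rfl⟩ := List.append_of_mem (List.singleton_sublist.1 hx₂)
    exact ⟨l₁, l₂ ++ l₃, l₄, by simp⟩
  have htail : IsPathFrom E x b ((x :: l₂) ++ x :: l₃) := (isPathFrom_append_cons h).2
  have hcycle := (isPathFrom_append_cons htail).1
  simpa using hacyclic x _ hcycle

theorem pathWeight_append_cons [CommRing R] (w : V → V → R) (A : List V) (x : V) (B : List V) :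
    pathWeight w (A ++ x :: B) = pathWeight w (A ++ [x]) * pathWeight w (x :: B) := by
  induction A with
  | nil => simp [pathWeight]
  | cons a A ih => cases A <;> simp_all [pathWeight, mul_assoc]

end Paths

section GeneratingFunctions

variable {V R : Type*} {n : ℕ} {E : V → V → Prop}
  (hfin : ∀ a b : V, {p : List V | IsPathFrom E a b p}.Finite)

theorem pathGF_eq_sum [CommRing R] (w : V → V → R) (a b : V) :
    pathGF E w a b = ∑ p ∈ (hfin a b).toFinset, pathWeight w p :=
  finsum_mem_eq_finite_toFinset_sum _ (hfin a b)

noncomputable def pathFamilies (a b : Fin n → V) : Finset (Fin n → List V) :=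
  Fintype.piFinset fun k => (hfin (a k) (b k)).toFinset

theorem mem_pathFamilies {a b : Fin n → V} {P : Fin n → List V} :
    P ∈ pathFamilies hfin a b ↔ ∀ k, IsPathFrom E (a k) (b k) (P k) := by
  simp [pathFamilies]

theorem prod_pathGF_eq_sum [CommRing R] (w : V → V → R) (a b : Fin n → V) :
    ∏ k, pathGF E w (a k) (b k) = ∑ P ∈ pathFamilies hfin a b, ∏ k, pathWeight w (P k) := by
  simp only [pathGF_eq_sum hfin]
  exact prod_univ_sum _ _

theorem nonIntGF_eq_sum [DecidablePred (@NonIntersecting V n)] [CommRing R] (w : V → V → R)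
    (a b : Fin n → V) :
    nonIntGF E w n a b =
      ∑ P ∈ (pathFamilies hfin a b).filter NonIntersecting, ∏ k, pathWeight w (P k) := by
  rw [nonIntGF, ← finsum_mem_coe_finset]
  refine (finsum_subtype_eq_finsum_cond (f := fun P : Fin n → List V => ∏ k, pathWeight w (P k))
    _).trans ?_
  simp [mem_pathFamilies]

end GeneratingFunctions

namespace LGV

variable {V R : Type*}

section Splice

variable [DecidableEq V]

def before (p : List V) (x : V) : List V := p.take (p.idxOf x)

def after (p : List V) (x : V) : List V := p.drop (p.idxOf x + 1)

def splice (p q : List V) (x : V) : List V := before p x ++ x :: after q x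

variable {p q : List V} {x y : V}

theorem before_append_cons_after (hx : x ∈ p) : before p x ++ x :: after p x = p := by
  have hlt := List.idxOf_lt_length_of_mem hx
  conv_rhs => rw [← List.take_append_drop (p.idxOf x) p, List.drop_eq_getElem_cons hlt,
    List.getElem_idxOf hlt]
  rfl

theorem notMem_before (p : List V) (x : V) : x ∉ before p x := by
  intro h
  have := (List.mem_take_iff_idxOf_lt (List.mem_of_mem_take h)).1 h
  omega

theorem before_append_cons {A : List V} (B : List V) (hx : x ∉ A) :
    before (A ++ x :: B) x = A := by
  simp [before, List.idxOf_append_of_notMem hx]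

theorem after_append_cons {A : List V} (B : List V) (hx : x ∉ A) : after (A ++ x :: B) x = B := by
  simp [after, List.idxOf_append_of_notMem hx]

theorem before_splice : before (splice p q x) x = before p x :=
  before_append_cons _ (notMem_before p x)

theorem after_splice : after (splice p q x) x = after q x :=
  after_append_cons _ (notMem_before p x)

theorem splice_splice (hx : x ∈ p) : splice (splice p q x) (splice q p x) x = p := by
  rw [splice, before_splice, after_splice, before_append_cons_after hx]

theorem mem_splice_self : x ∈ splice p q x := by simp [splice]

theorem mem_or_mem_of_mem_splice (hx : x ∈ p) (hy : y ∈ splice p q x) : y ∈ p ∨ y ∈ q := by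
  simp only [splice, List.mem_append, List.mem_cons] at hy
  rcases hy with hy | rfl | hy
  · exact .inl (List.mem_of_mem_take hy)
  · exact .inl hx
  · exact .inr (List.mem_of_mem_drop hy)

theorem idxOf_lt_idxOf_of_mem_after (hp : p.Nodup) (hx : x ∈ p) (hy : y ∈ after p x) :
    p.idxOf x < p.idxOf y := by
  rw [← before_append_cons_after hx] at hp ⊢
  have hyb : y ∉ before p x := fun h => List.disjoint_of_nodup_append hp h (.tail _ hy)
  have hyx : y ≠ x := fun h => (List.nodup_cons.1 hp.of_append_right).1 (h ▸ hy)
  rw [List.idxOf_append_of_notMem (notMem_before p x), List.idxOf_append_of_notMem hyb,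
    List.idxOf_cons_self, List.idxOf_cons_ne _ (Ne.symm hyx)]
  omega

theorem mem_after_of_idxOf_lt (hy : y ∈ p) (h : p.idxOf x < p.idxOf y) : y ∈ after p x := by
  rw [after, List.mem_drop_iff_getElem]
  refine ⟨p.idxOf y - (p.idxOf x + 1), by have := List.idxOf_lt_length_of_mem hy; omega, ?_⟩
  simp only [show p.idxOf x + 1 + (p.idxOf y - (p.idxOf x + 1)) = p.idxOf y by omega,
    List.getElem_idxOf]

theorem _root_.IsPathFrom.splice {E : V → V → Prop} {a b c d : V} (hp : IsPathFrom E a b p)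
    (hq : IsPathFrom E c d q) (hxp : x ∈ p) (hxq : x ∈ q) :
    IsPathFrom E a d (splice p q x) := by
  rw [← before_append_cons_after hxp] at hp
  rw [← before_append_cons_after hxq] at hq
  exact (isPathFrom_append_cons hp).1.append_cons (isPathFrom_append_cons hq).2

theorem pathWeight_splice_mul_pathWeight_splice [CommRing R] (w : V → V → R) (hxp : x ∈ p)
    (hxq : x ∈ q) :
    pathWeight w (splice p q x) * pathWeight w (splice q p x) =
      pathWeight w p * pathWeight w q := by
  conv_rhs => rw [← before_append_cons_after hxp, ← before_append_cons_after hxq]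
  simp only [splice, pathWeight_append_cons w _ x (after p x),
    pathWeight_append_cons w _ x (after q x)]
  ring

end Splice

section Exchange

variable {n : ℕ} [DecidableEq V]

def Meets (P : Fin n → List V) (i : Fin n) : Prop :=
  ∃ j ≠ i, ∃ y ∈ P i, y ∈ P j

def exchange (P : Fin n → List V) (i j : Fin n) (x : V) : Fin n → List V :=
  Function.update (Function.update P i (splice (P j) (P i) x)) j (splice (P i) (P j) x)

variable {P : Fin n → List V} {i j k : Fin n} {x y : V}

theorem exchange_apply_left (hij : i ≠ j) : exchange P i j x i = splice (P j) (P i) x := by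
  rw [exchange, Function.update_of_ne hij, Function.update_self]

theorem exchange_apply_right : exchange P i j x j = splice (P i) (P j) x :=
  Function.update_self ..

theorem exchange_apply_of_ne (hki : k ≠ i) (hkj : k ≠ j) : exchange P i j x k = P k := by
  rw [exchange, Function.update_of_ne hkj, Function.update_of_ne hki]

theorem exchange_exchange (hij : i ≠ j) (hi : x ∈ P i) (hj : x ∈ P j) :
    exchange (exchange P i j x) i j x = P := by
  funext k
  by_cases hki : k = i
  · subst hki
    rw [exchange_apply_left hij, exchange_apply_right, exchange_apply_left hij, splice_splice hi]
  by_cases hkj : k = j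
  · subst hkj
    rw [exchange_apply_right, exchange_apply_left hij, exchange_apply_right, splice_splice hj]
  rw [exchange_apply_of_ne hki hkj, exchange_apply_of_ne hki hkj]

theorem mem_exchange_left (hij : i ≠ j) : x ∈ exchange P i j x i := by
  rw [exchange_apply_left hij]; exact mem_splice_self

theorem mem_exchange_right : x ∈ exchange P i j x j := by
  rw [exchange_apply_right]; exact mem_splice_self

theorem mem_or_mem_of_mem_exchange (hij : i ≠ j) (hi : x ∈ P i) (hj : x ∈ P j)
    (hk : k = i ∨ k = j) (hy : y ∈ exchange P i j x k) : y ∈ P i ∨ y ∈ P j := by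
  rcases hk with rfl | rfl
  · rw [exchange_apply_left hij] at hy; exact (mem_or_mem_of_mem_splice hj hy).symm
  · rw [exchange_apply_right] at hy; exact mem_or_mem_of_mem_splice hi hy

theorem meets_of_meets_exchange (hij : i ≠ j) (hi : x ∈ P i) (hj : x ∈ P j)
    (hk : Meets (exchange P i j x) k) : Meets P k := by
  by_cases hki : k = i
  · exact hki ▸ ⟨j, hij.symm, x, hi, hj⟩
  by_cases hkj : k = j
  · exact hkj ▸ ⟨i, hij, x, hj, hi⟩
  obtain ⟨l, hlk, y, hyk, hyl⟩ := hk
  rw [exchange_apply_of_ne hki hkj] at hyk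
  by_cases hl : l = i ∨ l = j
  · rcases mem_or_mem_of_mem_exchange hij hi hj hl hyl with hy | hy
    exacts [⟨i, Ne.symm hki, y, hyk, hy⟩, ⟨j, Ne.symm hkj, y, hyk, hy⟩]
  · rw [not_or] at hl
    exact ⟨l, hlk, y, hyk, by rwa [exchange_apply_of_ne hl.1 hl.2] at hyl⟩

theorem meets_exchange_iff (hij : i ≠ j) (hi : x ∈ P i) (hj : x ∈ P j) :
    Meets (exchange P i j x) k ↔ Meets P k := by
  refine ⟨meets_of_meets_exchange hij hi hj, fun hk => ?_⟩
  rw [← exchange_exchange hij hi hj] at hk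
  exact meets_of_meets_exchange hij (mem_exchange_left hij) mem_exchange_right hk

structure IsPivot (P : Fin n → List V) (i : Fin n) (x : V) (j : Fin n) : Prop where
  ne : i ≠ j
  mem_left : x ∈ P i
  mem_right : x ∈ P j
  le_of_meets : ∀ k, Meets P k → i ≤ k
  notMem_of_mem_after : ∀ y ∈ after (P i) x, ∀ k ≠ i, y ∉ P k
  le_of_mem : ∀ k ≠ i, x ∈ P k → j ≤ k

theorem IsPivot.meets (h : IsPivot P i x j) : Meets P i :=
  ⟨j, h.ne.symm, x, h.mem_left, h.mem_right⟩

theorem IsPivot.unique {i' j' : Fin n} {x' : V} (h : IsPivot P i x j) (h' : IsPivot P i' x' j') :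
    i = i' ∧ x = x' ∧ j = j' := by
  obtain rfl : i = i' := le_antisymm (h.le_of_meets _ h'.meets) (h'.le_of_meets _ h.meets)
  have hnlt : ∀ {x x' : V} {j j' : Fin n}, IsPivot P i x j → IsPivot P i x' j' →
      ¬ (P i).idxOf x < (P i).idxOf x' := fun h h' hlt =>
    h.notMem_of_mem_after _ (mem_after_of_idxOf_lt h'.mem_left hlt) _ h'.ne.symm h'.mem_right
  obtain rfl : x = x' := (List.idxOf_inj h.mem_left).1 (by
    have := hnlt h h'; have := hnlt h' h; omega)
  exact ⟨rfl, rfl, le_antisymm (h.le_of_mem _ h'.ne.symm h'.mem_right)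
    (h'.le_of_mem _ h.ne.symm h.mem_right)⟩

theorem exists_isPivot (hP : ¬ NonIntersecting P) (hnd : ∀ k, (P k).Nodup) :
    ∃ i x j, IsPivot P i x j := by
  classical
  obtain ⟨i, hi, hi_min⟩ : ∃ i, Meets P i ∧ ∀ k, Meets P k → i ≤ k := by
    simp only [NonIntersecting, not_forall, not_not] at hP
    obtain ⟨k, l, hkl, y, hyk, hyl⟩ := hP
    obtain ⟨i, hi, hi_min⟩ := (univ.filter (Meets P)).exists_min_image id
      ⟨k, mem_filter.2 ⟨mem_univ k, l, Ne.symm hkl, y, hyk, hyl⟩⟩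
    exact ⟨i, (mem_filter.1 hi).2, fun k hk => hi_min k (mem_filter.2 ⟨mem_univ k, hk⟩)⟩
  obtain ⟨x, hx, hx_max⟩ := ((P i).toFinset.filter (fun y => ∃ k ≠ i, y ∈ P k)).exists_max_image
    (P i).idxOf (by
      obtain ⟨k, hki, y, hyi, hyk⟩ := hi
      exact ⟨y, mem_filter.2 ⟨List.mem_toFinset.2 hyi, k, hki, hyk⟩⟩)
  simp only [mem_filter, List.mem_toFinset] at hx hx_max
  obtain ⟨hxi, hx_shared⟩ := hx
  obtain ⟨j, hj, hj_min⟩ := (univ.filter (fun k => k ≠ i ∧ x ∈ P k)).exists_min_image id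
    (by obtain ⟨k, hki, hxk⟩ := hx_shared; exact ⟨k, mem_filter.2 ⟨mem_univ k, hki, hxk⟩⟩)
  simp only [mem_filter, mem_univ, true_and, id] at hj hj_min
  refine ⟨i, x, j, Ne.symm hj.1, hxi, hj.2, hi_min, fun y hy k hki hyk => ?_,
    fun k hki hxk => hj_min k ⟨hki, hxk⟩⟩
  have hlt := idxOf_lt_idxOf_of_mem_after (hnd i) hxi hy
  have := hx_max y ⟨List.mem_of_mem_drop hy, k, hki, hyk⟩
  omega

/-- The exchange keeps `P i` from `x` on, which is why `x` is taken to be the last shared vertex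
of `P i`. -/
theorem IsPivot.exchange (h : IsPivot P i x j) (hnd : (P i).Nodup) :
    IsPivot (exchange P i j x) i x j := by
  have hij := h.ne
  refine ⟨hij, mem_exchange_left hij, mem_exchange_right, fun k hk => ?_, ?_, ?_⟩
  · exact h.le_of_meets k ((meets_exchange_iff hij h.mem_left h.mem_right).1 hk)
  · rw [exchange_apply_left hij, after_splice]
    intro y hy k hki hyk
    by_cases hkj : k = j
    · have hlt := idxOf_lt_idxOf_of_mem_after hnd h.mem_left hy
      rw [hkj, exchange_apply_right, splice] at hyk
      simp only [List.mem_append, List.mem_cons] at hyk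
      rcases hyk with hyk | rfl | hyk
      · have := (List.mem_take_iff_idxOf_lt (List.mem_of_mem_drop hy)).1 hyk
        omega
      · exact lt_irrefl _ hlt
      · exact h.notMem_of_mem_after y hy j h.ne.symm (List.mem_of_mem_drop hyk)
    · rw [exchange_apply_of_ne hki hkj] at hyk
      exact h.notMem_of_mem_after y hy k hki hyk
  · intro k hki hxk
    by_cases hkj : k = j
    · exact hkj.ge
    · exact h.le_of_mem k hki (by rwa [exchange_apply_of_ne hki hkj] at hxk)

end Exchange

section Cancellation

variable {n : ℕ} {E : V → V → Prop} {P : Fin n → List V} {i j : Fin n} {x : V}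

theorem isPathFrom_exchange [DecidableEq V] {a b : Fin n → V}
    (hP : ∀ k, IsPathFrom E (a k) (b k) (P k)) (hij : i ≠ j) (hi : x ∈ P i) (hj : x ∈ P j)
    (k : Fin n) :
    IsPathFrom E (a (Equiv.swap i j k)) (b k) (exchange P i j x k) := by
  by_cases hki : k = i
  · subst hki
    rw [Equiv.swap_apply_left, exchange_apply_left hij]
    exact (hP j).splice (hP k) hj hi
  by_cases hkj : k = j
  · subst hkj
    rw [Equiv.swap_apply_right, exchange_apply_right]
    exact (hP i).splice (hP k) hi hj
  rw [Equiv.swap_apply_of_ne_of_ne hki hkj, exchange_apply_of_ne hki hkj]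
  exact hP k

theorem prod_pathWeight_exchange [DecidableEq V] [CommRing R] (w : V → V → R) (hij : i ≠ j)
    (hi : x ∈ P i) (hj : x ∈ P j) :
    ∏ k, pathWeight w (exchange P i j x k) = ∏ k, pathWeight w (P k) := by
  have hsplit : ∀ f : Fin n → R, ∏ k, f k = f i * f j * ∏ k ∈ (univ.erase i).erase j, f k :=
    fun f => by
      rw [← mul_prod_erase _ _ (mem_univ i),
        ← mul_prod_erase _ _ (mem_erase.2 ⟨hij.symm, mem_univ j⟩), mul_assoc]
  rw [hsplit, hsplit fun k => pathWeight w (P k), exchange_apply_left hij, exchange_apply_right,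
    mul_comm (pathWeight w (splice _ _ x)), pathWeight_splice_mul_pathWeight_splice w hi hj]
  congr 1
  refine prod_congr rfl fun k hk => ?_
  simp only [mem_erase] at hk
  rw [exchange_apply_of_ne hk.2.1 hk.1]

theorem sum_sign_smul_prod_pathWeight_eq_zero [CommRing R] (w : V → V → R)
    (hacyclic : ∀ x p, IsPathFrom E x x p → p.length ≤ 1) (u v : Fin n → V)
    (s : Finset (Σ _ : Equiv.Perm (Fin n), Fin n → List V))
    (hs : ∀ c, c ∈ s ↔ (∀ k, IsPathFrom E (u (c.1 k)) (v k) (c.2 k)) ∧ ¬ NonIntersecting c.2) :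
    ∑ c ∈ s, (Equiv.Perm.sign c.1 : ℤ) • ∏ k, pathWeight w (c.2 k) = 0 := by
  classical
  have hnd : ∀ c ∈ s, ∀ k, (c.2 k).Nodup := fun c hc k => (((hs c).1 hc).1 k).nodup hacyclic
  have hpivot : ∀ c ∈ s, ∃ i x j, IsPivot c.2 i x j :=
    fun c hc => exists_isPivot ((hs c).1 hc).2 (hnd c hc)
  choose i x j hpivot using hpivot
  let g : ∀ c ∈ s, Σ _ : Equiv.Perm (Fin n), Fin n → List V := fun c hc =>
    ⟨c.1 * Equiv.swap (i c hc) (j c hc), exchange c.2 (i c hc) (j c hc) (x c hc)⟩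
  have hg_mem : ∀ c hc, g c hc ∈ s := fun c hc => by
    have h := hpivot c hc
    refine (hs _).2 ⟨isPathFrom_exchange ((hs c).1 hc).1 h.ne h.mem_left h.mem_right, ?_⟩
    exact fun hni => hni _ _ h.ne _ (mem_exchange_left h.ne) mem_exchange_right
  refine sum_involution g (fun c hc => ?_) (fun c hc _ hgc => ?_) hg_mem (fun c hc => ?_)
  · have h := hpivot c hc
    simp only [g, prod_pathWeight_exchange w h.ne h.mem_left h.mem_right, Equiv.Perm.sign_mul,
      Equiv.Perm.sign_swap h.ne]
    push_cast
    rw [mul_neg_one, neg_smul, add_neg_cancel]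
  · have h := hpivot c hc
    apply h.ne
    simpa [g] using congrArg Sigma.fst hgc
  · have h := hpivot c hc
    obtain ⟨hi, hx, hj⟩ := (hpivot _ (hg_mem c hc)).unique (h.exchange (hnd c hc _))
    simp only [g, hi, hx, hj, mul_assoc, Equiv.swap_mul_self, mul_one,
      exchange_exchange h.ne h.mem_left h.mem_right]

end Cancellation

end LGV

/-- Lindström–Gessel–Viennot lemma:
`Σ_{π ∈ S_n} sgn(π) F₀(u^π, v) = det[h(u_i, v_j)]`. -/
theorem lindstrom_gessel_viennot {V R : Type*} [CommRing R]
    (E : V → V → Prop) (w : V → V → R)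
    (hacyclic : ∀ x : V, ∀ p : List V, IsPathFrom E x x p → p.length ≤ 1)
    (hfin : ∀ a b : V, {p : List V | IsPathFrom E a b p}.Finite)
    (n : ℕ) (u v : Fin n → V) :
    ∑ σ : Equiv.Perm (Fin n),
        (Equiv.Perm.sign σ : ℤ) • nonIntGF E w n (u ∘ σ) v =
      Matrix.det (Matrix.of fun i j : Fin n => pathGF E w (u i) (v j)) := by
  classical
  let F : (Σ _ : Equiv.Perm (Fin n), Fin n → List V) → R :=
    fun c => (Equiv.Perm.sign c.1 : ℤ) • ∏ k, pathWeight w (c.2 k)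
  let s := univ.sigma fun σ : Equiv.Perm (Fin n) => pathFamilies hfin (u ∘ σ) v
  have hdet : Matrix.det (Matrix.of fun i j : Fin n => pathGF E w (u i) (v j)) = ∑ c ∈ s, F c := by
    rw [Matrix.det_apply, sum_sigma]
    refine sum_congr rfl fun σ _ => ?_
    simp only [F, Matrix.of_apply, Units.smul_def, ← smul_sum]
    exact congrArg _ (prod_pathGF_eq_sum hfin w (u ∘ σ) v)
  have hnonint : ∑ σ : Equiv.Perm (Fin n), (Equiv.Perm.sign σ : ℤ) • nonIntGF E w n (u ∘ σ) v =
      ∑ c ∈ s with NonIntersecting c.2, F c := by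
    rw [sum_filter, sum_sigma]
    refine sum_congr rfl fun σ _ => ?_
    rw [nonIntGF_eq_sum hfin w, sum_filter, smul_sum]
    exact sum_congr rfl fun P _ => smul_ite_zero ..
  have hint : ∑ c ∈ s with ¬ NonIntersecting c.2, F c = 0 :=
    LGV.sum_sign_smul_prod_pathWeight_eq_zero w hacyclic u v _ fun c => by
      simp [s, mem_pathFamilies]
  rw [hdet, ← sum_filter_add_sum_filter_not s (fun c => NonIntersecting c.2), hint, add_zero,
    hnonint]
end

section
/- The q-binomial theorem: for |q| < 1 and |x| < 1 (or as formal power series in x), Σ_{k=0}^{∞} ((a;q)_k / (q;q)_k) x^k = (ax;q)_∞ / (x;q)_∞, where (a;q)_k = ∏_{i=0}^{k−1}(1 − a q^i) and (a;q)_∞ = ∏_{i=0}^{∞}(1 − a q^i). -/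
open Finset

/-- The finite q-Pochhammer symbol `(a;q)_k = ∏_{i=0}^{k-1} (1 - a q^i)`. -/
def qPoch (a q : ℂ) (k : ℕ) : ℂ := ∏ i ∈ Finset.range k, (1 - a * q ^ i)

/-- The infinite q-Pochhammer symbol `(a;q)_∞ = ∏_{i≥0} (1 - a q^i)`. -/
noncomputable def qPochInf (a q : ℂ) : ℂ := ∏' i : ℕ, (1 - a * q ^ i)

/-!
Let `F(y) = ∑ₖ cₖ yᵏ` with `cₖ = (a;q)ₖ/(q;q)ₖ`. Since `cₖ₊₁/cₖ = (1 - a qᵏ)/(1 - qᵏ⁺¹) → 1`,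
the series converges absolutely on the open unit disc, locally uniformly.
The recursion `cₖ₊₁ (1 - qᵏ⁺¹) = cₖ (1 - a qᵏ)` is the coefficientwise form of the functional
equation `(1 - y) F(y) = (1 - a y) F(q y)`. Iterating it gives `(x;q)ₙ F(x) = (ax;q)ₙ F(qⁿ x)`,
and letting `n → ∞` (so that `qⁿ x → 0` and `F(qⁿ x) → F(0) = 1`) yields
`(x;q)_∞ F(x) = (ax;q)_∞`.
-/

open Filter Topology Metric

lemma one_sub_ne_zero_of_norm_lt_one {z : ℂ} (hz : ‖z‖ < 1) : 1 - z ≠ 0 :=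
  sub_ne_zero.2 fun h => by simp [← h] at hz

lemma norm_mul_pow_lt_one {z q : ℂ} (hz : ‖z‖ < 1) (hq : ‖q‖ ≤ 1) (n : ℕ) :
    ‖z * q ^ n‖ < 1 :=
  calc ‖z * q ^ n‖ = ‖z‖ * ‖q‖ ^ n := by rw [norm_mul, norm_pow]
    _ ≤ ‖z‖ := mul_le_of_le_one_right (norm_nonneg z) (pow_le_one₀ (norm_nonneg q) hq)
    _ < 1 := hz

lemma one_sub_pow_succ_ne_zero {q : ℂ} (hq : ‖q‖ < 1) (k : ℕ) : 1 - q ^ (k + 1) ≠ 0 :=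
  one_sub_ne_zero_of_norm_lt_one (by simpa [pow_succ'] using norm_mul_pow_lt_one hq hq.le k)

lemma qPoch_succ (a q : ℂ) (k : ℕ) : qPoch a q (k + 1) = qPoch a q k * (1 - a * q ^ k) :=
  prod_range_succ _ _

lemma qPoch_ne_zero {z q : ℂ} (hz : ‖z‖ < 1) (hq : ‖q‖ ≤ 1) (k : ℕ) : qPoch z q k ≠ 0 :=
  prod_ne_zero_iff.2 fun i _ => one_sub_ne_zero_of_norm_lt_one (norm_mul_pow_lt_one hz hq i)

lemma summable_norm_neg_mul_pow (z : ℂ) {q : ℂ} (hq : ‖q‖ < 1) :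
    Summable fun n : ℕ => ‖-(z * q ^ n)‖ := by
  simpa only [norm_neg, norm_mul, norm_pow] using
    (summable_geometric_of_lt_one (norm_nonneg q) hq).mul_left ‖z‖

lemma tendsto_qPoch_qPochInf (z : ℂ) {q : ℂ} (hq : ‖q‖ < 1) :
    Tendsto (qPoch z q) atTop (𝓝 (qPochInf z q)) := by
  have :=
    (multipliable_one_add_of_summable (summable_norm_neg_mul_pow z hq)).tendsto_prod_tprod_nat
  simp only [← sub_eq_add_neg] at this
  exact this

lemma qPochInf_ne_zero {z q : ℂ} (hz : ‖z‖ < 1) (hq : ‖q‖ < 1) : qPochInf z q ≠ 0 := by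
  have hfactor (n : ℕ) : 1 + -(z * q ^ n) ≠ 0 := by
    rw [← sub_eq_add_neg]
    exact one_sub_ne_zero_of_norm_lt_one (norm_mul_pow_lt_one hz hq.le n)
  have := tprod_one_add_ne_zero_of_summable hfactor (summable_norm_neg_mul_pow z hq)
  simp only [← sub_eq_add_neg] at this
  exact this

noncomputable def qBinomCoeff (a q : ℂ) (k : ℕ) : ℂ := qPoch a q k / qPoch q q k

noncomputable def qBinomSeries (a q y : ℂ) : ℂ := ∑' k : ℕ, qBinomCoeff a q k * y ^ k

section

variable (a : ℂ) {q : ℂ}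

lemma qBinomCoeff_zero : qBinomCoeff a q 0 = 1 := by
  simp [qBinomCoeff, qPoch]

lemma qBinomCoeff_succ (hq : ‖q‖ < 1) (k : ℕ) :
    qBinomCoeff a q (k + 1) = qBinomCoeff a q k * ((1 - a * q ^ k) / (1 - q ^ (k + 1))) := by
  rw [qBinomCoeff, qBinomCoeff, qPoch_succ, qPoch_succ, ← pow_succ']
  field_simp [qPoch_ne_zero hq hq.le k, one_sub_pow_succ_ne_zero hq k]

lemma summable_norm_qBinomCoeff_mul_pow (hq : ‖q‖ < 1) {y : ℂ} (hy : ‖y‖ < 1) :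
    Summable fun k => ‖qBinomCoeff a q k * y ^ k‖ := by
  set ρ : ℕ → ℂ := fun k => (1 - a * q ^ k) / (1 - q ^ (k + 1))
  have hρ : Tendsto (fun k => ‖ρ k‖ * ‖y‖) atTop (𝓝 ‖y‖) := by
    have hqk := tendsto_pow_atTop_nhds_zero_of_norm_lt_one hq
    have : Tendsto ρ atTop (𝓝 ((1 - a * 0) / (1 - q * 0))) := by
      simp only [ρ, pow_succ']
      exact (tendsto_const_nhds.sub (hqk.const_mul a)).div
        (tendsto_const_nhds.sub (hqk.const_mul q)) (by simp)
    simpa using this.norm.mul_const ‖y‖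
  have hlt : ‖y‖ < (1 + ‖y‖) / 2 := by linarith
  refine summable_of_ratio_norm_eventually_le (r := (1 + ‖y‖) / 2) (by linarith) ?_
  filter_upwards [hρ.eventually_le_const hlt] with k hk
  simp only [norm_norm, qBinomCoeff_succ a hq, norm_mul, norm_pow, pow_succ]
  calc ‖qBinomCoeff a q k‖ * ‖ρ k‖ * (‖y‖ ^ k * ‖y‖)
      = ‖ρ k‖ * ‖y‖ * (‖qBinomCoeff a q k‖ * ‖y‖ ^ k) := by ring
    _ ≤ (1 + ‖y‖) / 2 * (‖qBinomCoeff a q k‖ * ‖y‖ ^ k) := by gcongr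

lemma qBinomSeries_zero : qBinomSeries a q 0 = 1 := by
  rw [qBinomSeries, tsum_eq_single 0 fun k hk => by simp [zero_pow hk]]
  simp [qBinomCoeff_zero]

lemma continuousOn_qBinomSeries (hq : ‖q‖ < 1) {x : ℂ} (hx : ‖x‖ < 1) :
    ContinuousOn (qBinomSeries a q) (closedBall 0 ‖x‖) := by
  refine continuousOn_tsum (fun k => by fun_prop) (summable_norm_qBinomCoeff_mul_pow a hq hx)
    fun k y hy => ?_
  rw [mem_closedBall_zero_iff] at hy
  simp only [norm_mul, norm_pow]
  gcongr

lemma tendsto_qBinomSeries_pow_mul (hq : ‖q‖ < 1) {x : ℂ} (hx : ‖x‖ < 1) :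
    Tendsto (fun n => qBinomSeries a q (q ^ n * x)) atTop (𝓝 1) := by
  have hlim : Tendsto (fun n => q ^ n * x) atTop (𝓝[closedBall 0 ‖x‖] 0) := by
    refine tendsto_nhdsWithin_iff.2 ⟨?_, .of_forall fun n => ?_⟩
    · simpa using (tendsto_pow_atTop_nhds_zero_of_norm_lt_one hq).mul_const x
    · rw [mem_closedBall_zero_iff, norm_mul, norm_pow]
      exact mul_le_of_le_one_left (norm_nonneg x) (pow_le_one₀ (norm_nonneg q) hq.le)
  rw [← qBinomSeries_zero a]
  exact ((continuousOn_qBinomSeries a hq hx) 0 (by simp)).tendsto.comp hlim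

lemma one_sub_mul_qBinomSeries (hq : ‖q‖ < 1) {y : ℂ} (hy : ‖y‖ < 1) :
    (1 - y) * qBinomSeries a q y = (1 - a * y) * qBinomSeries a q (q * y) := by
  set c := qBinomCoeff a q
  have hqy : ‖q * y‖ < 1 := by
    rw [norm_mul]; exact (mul_le_of_le_one_left (norm_nonneg y) hq.le).trans_lt hy
  have hS : Summable fun k => c k * y ^ k := (summable_norm_qBinomCoeff_mul_pow a hq hy).of_norm
  have hSq : Summable fun k => c k * (q * y) ^ k :=
    (summable_norm_qBinomCoeff_mul_pow a hq hqy).of_norm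
  have hsub : qBinomSeries a q y - qBinomSeries a q (q * y) = ∑' k, c k * (1 - q ^ k) * y ^ k := by
    rw [qBinomSeries, qBinomSeries, ← hS.tsum_sub hSq]
    congr 1; ext k; ring
  have hsub' : qBinomSeries a q y - a * qBinomSeries a q (q * y) =
      ∑' k, c k * (1 - a * q ^ k) * y ^ k := by
    rw [qBinomSeries, qBinomSeries, ← tsum_mul_left, ← hS.tsum_sub (hSq.mul_left a)]
    congr 1; ext k; ring
  -- the term `k = 0` vanishes, and the coefficient recursion shifts the rest by one
  have hshift : ∑' k, c k * (1 - q ^ k) * y ^ k = y * ∑' k, c k * (1 - a * q ^ k) * y ^ k := by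
    have hsum : Summable fun k => c k * (1 - q ^ k) * y ^ k :=
      (hS.sub hSq).congr fun k => by ring
    rw [hsum.tsum_eq_zero_add, ← tsum_mul_left]
    simp only [pow_zero, sub_self, mul_zero, zero_mul, zero_add]
    congr 1; ext k
    rw [show c (k + 1) = _ from qBinomCoeff_succ a hq k, mul_assoc (c k),
      div_mul_cancel₀ _ (one_sub_pow_succ_ne_zero hq k)]
    ring
  linear_combination hsub - y * hsub' + hshift

lemma qPoch_mul_qBinomSeries (hq : ‖q‖ < 1) {x : ℂ} (hx : ‖x‖ < 1) (n : ℕ) :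
    qPoch x q n * qBinomSeries a q x = qPoch (a * x) q n * qBinomSeries a q (q ^ n * x) := by
  induction n with
  | zero => simp [qPoch]
  | succ n ih =>
    have hy : ‖q ^ n * x‖ < 1 := by simpa [mul_comm] using norm_mul_pow_lt_one hx hq.le n
    calc qPoch x q (n + 1) * qBinomSeries a q x
        = (1 - q ^ n * x) * (qPoch x q n * qBinomSeries a q x) := by rw [qPoch_succ]; ring
      _ = qPoch (a * x) q n * ((1 - q ^ n * x) * qBinomSeries a q (q ^ n * x)) := by
          rw [ih]; ring
      _ = qPoch (a * x) q n * ((1 - a * (q ^ n * x)) * qBinomSeries a q (q * (q ^ n * x))) := by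
          rw [one_sub_mul_qBinomSeries a hq hy]
      _ = qPoch (a * x) q (n + 1) * qBinomSeries a q (q ^ (n + 1) * x) := by
          rw [qPoch_succ, pow_succ', mul_assoc q]; ring

lemma qPochInf_mul_qBinomSeries (hq : ‖q‖ < 1) {x : ℂ} (hx : ‖x‖ < 1) :
    qPochInf x q * qBinomSeries a q x = qPochInf (a * x) q := by
  have hlim : Tendsto (fun n => qPoch (a * x) q n * qBinomSeries a q (q ^ n * x)) atTop
      (𝓝 (qPochInf (a * x) q * 1)) :=
    (tendsto_qPoch_qPochInf _ hq).mul (tendsto_qBinomSeries_pow_mul a hq hx)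
  have hlim' : Tendsto (fun n => qPoch (a * x) q n * qBinomSeries a q (q ^ n * x)) atTop
      (𝓝 (qPochInf x q * qBinomSeries a q x)) :=
    ((tendsto_qPoch_qPochInf x hq).mul_const _).congr (qPoch_mul_qBinomSeries a hq hx)
  simpa using tendsto_nhds_unique hlim' hlim

end

/-- the q-binomial theorem: for `|q| < 1` and `|x| < 1`,
`Σ_{k≥0} ((a;q)_k/(q;q)_k) x^k = (ax;q)_∞/(x;q)_∞`. -/
theorem q_binomial_theorem (a q x : ℂ) (hq : ‖q‖ < 1) (hx : ‖x‖ < 1) :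
    ∑' k : ℕ, (qPoch a q k / qPoch q q k) * x ^ k =
      qPochInf (a * x) q / qPochInf x q :=
  (eq_div_iff (qPochInf_ne_zero hx hq)).2 <| by
    rw [mul_comm]; exact qPochInf_mul_qBinomSeries a hq hx
end

section
/- For a 2n×2n skew-symmetric tridiagonal matrix B with superdiagonal entries α₁, …, α_{2n−1}, and any even-size subset μ = {μ₁ < … < μ_{2m}} ⊆ {1,…,2n}, the sub-Pfaffian Pf(B^μ_μ) (Pfaffian of the submatrix of B on rows and columns μ) is zero unless μ_{2k} = μ_{2k−1} + 1 for all k = 1,…,m, in which case Pf(B^μ_μ) = ∏_{k=1}^{m} α_{μ_{2k−1}}. -/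
/-!
Expand the Pfaffian over permutations. For a tridiagonal matrix a term `σ` survives only if
`σ` maps every pair `{2k, 2k + 1}` onto two neighbours; these images form a perfect matching of
the path `0 – 1 – ⋯ – (2m - 1)`, which is unique, so `σ` preserves the pairing, i.e. lies in the
hyperoctahedral group. For a skew-symmetric matrix all elements of this group, of order `2^m m!`,
contribute the same term `∏ A_{2k, 2k+1}`, which cancels the normalisation. A principal
submatrix of `B` along an increasing `μ` is again tridiagonal, because `μ_j = μ_i + 1` forces
`j = i + 1`.
-/

open Finset

/-- The Pfaffian of a `2n × 2n` skew-symmetric complex matrix, via the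
permutation-sum formula `Pf(A) = (2^n n!)⁻¹ Σ_σ sgn(σ) ∏_k A_{σ(2k-1), σ(2k)}`. -/
noncomputable def pfaffian (n : ℕ) (A : Matrix (Fin (2 * n)) (Fin (2 * n)) ℂ) : ℂ :=
  ((2 : ℂ) ^ n * (n.factorial : ℂ))⁻¹ *
    ∑ σ : Equiv.Perm (Fin (2 * n)),
      ((Equiv.Perm.sign σ : ℤ) : ℂ) *
        ∏ k : Fin n,
          A (σ ⟨2 * (k : ℕ), by have := k.isLt; omega⟩)
            (σ ⟨2 * (k : ℕ) + 1, by have := k.isLt; omega⟩)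


open Equiv Equiv.Perm

theorem Fin.val_add_one_eq_of_strictMono {a b : ℕ} {f : Fin a → Fin b} (hf : StrictMono f)
    {i j : Fin a} (h : (f j : ℕ) = f i + 1) : (j : ℕ) = i + 1 := by
  have hcov : f i ⋖ f j := Fin.covBy_iff.2 (Nat.covBy_iff_add_one_eq.2 h.symm)
  exact (Nat.covBy_iff_add_one_eq.1
    (Fin.covBy_iff.1 (hcov.of_image (OrderEmbedding.ofStrictMono f hf)))).symm

/-- A path has only one perfect matching. -/
theorem Fin.div_two_eq_of_involutive_of_adjacent {n : ℕ} {π : Fin n → Fin n}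
    (hπ : Function.Involutive π) (hadj : ∀ x, (π x : ℕ) = x + 1 ∨ (x : ℕ) = π x + 1)
    (x : Fin n) : (π x : ℕ) / 2 = x / 2 := by
  induction x using WellFoundedLT.induction with
  | ind x ih =>
  rcases hadj x with hup | hdown
  · by_contra hodd
    let y : Fin n := ⟨x - 1, by omega⟩
    have hy := ih y (Fin.lt_def.2 (by simp only [y]; omega))
    rcases hadj y with hy' | hy'
    · have hπy : π y = x := Fin.ext (by simp only [y] at hy' ⊢; omega)
      have hπx : π x = y := by rw [← hπy, hπ]
      rw [hπx] at hup
      simp only [y] at hup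
      omega
    · simp only [y] at hy hy'
      omega
  · have h := ih (π x) (Fin.lt_def.2 (by omega))
    rw [hπ] at h
    omega

theorem Equiv.Perm.exists_eq_prodCongrLeft_mul_prodCongrRight {α β : Type*} [Finite α]
    [Finite β] [Nonempty β] (σ : Perm (α × β)) (hσ : ∀ a b b', (σ (a, b)).1 = (σ (a, b')).1) :
    ∃ (τ : Perm α) (ε : α → Perm β), σ = prodCongrLeft (fun _ => τ) * prodCongrRight ε := by
  obtain ⟨b₀⟩ := ‹Nonempty β›
  have hε : ∀ a, Function.Bijective fun b => (σ (a, b)).2 := fun a =>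
    Finite.injective_iff_bijective.1 fun b b' h => by
      simpa using σ.injective (Prod.ext (hσ a b b') h)
  have hτ : Function.Bijective fun a => (σ (a, b₀)).1 :=
    Finite.injective_iff_bijective.1 fun a a' h => by
      obtain ⟨b, hb⟩ := (hε a).2 (σ (a', b₀)).2
      have hab : σ (a, b) = σ (a', b₀) := Prod.ext ((hσ a b b₀).trans h) hb
      exact congrArg Prod.fst (σ.injective hab)
  refine ⟨ofBijective _ hτ, fun a => ofBijective _ (hε a), ?_⟩
  ext ⟨a, b⟩ <;> simp [hσ a b b₀]

theorem Equiv.Perm.apply_fin_two_of_antisymm {R : Type*} [CommRing R] (f : Fin 2 → Fin 2 → R)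
    (hf : ∀ i j, f j i = -f i j) (p : Perm (Fin 2)) :
    f (p 0) (p 1) = (sign p : ℤ) * f 0 1 := by
  have hp : ∀ p : Perm (Fin 2), p = 1 ∨ p = swap 0 1 := by decide
  rcases hp p with rfl | rfl
  · simp
  · simp [hf 0 1]

section Blocks

variable {m : ℕ}

def finPairEquiv (m : ℕ) : Fin m × Fin 2 ≃ Fin (2 * m) :=
  finProdFinEquiv.trans (finCongr (Nat.mul_comm m 2))

@[simp]
theorem finPairEquiv_apply_val (p : Fin m × Fin 2) :
    (finPairEquiv m p : ℕ) = 2 * p.1 + p.2 := by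
  simp [finPairEquiv, Nat.add_comm]

theorem finPairEquiv_symm_apply_fst_val (x : Fin (2 * m)) :
    (((finPairEquiv m).symm x).1 : ℕ) = x / 2 := by
  simp [finPairEquiv]

theorem finPairEquiv_mk_zero (k : Fin m) :
    finPairEquiv m (k, 0) = ⟨2 * (k : ℕ), by have := k.isLt; omega⟩ :=
  Fin.ext (by simp)

theorem finPairEquiv_mk_one (k : Fin m) :
    finPairEquiv m (k, 1) = ⟨2 * (k : ℕ) + 1, by have := k.isLt; omega⟩ :=
  Fin.ext (by simp)

/-- The elements of the hyperoctahedral group, the stabiliser of the pairing `{2k, 2k + 1}`. -/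
def blockPerm (τ : Perm (Fin m)) (ε : Fin m → Perm (Fin 2)) : Perm (Fin (2 * m)) :=
  (finPairEquiv m).permCongr (prodCongrLeft (fun _ => τ) * prodCongrRight ε)

@[simp]
theorem blockPerm_apply (τ : Perm (Fin m)) (ε : Fin m → Perm (Fin 2)) (k : Fin m) (b : Fin 2) :
    blockPerm τ ε (finPairEquiv m (k, b)) = finPairEquiv m (τ k, ε k b) := by
  simp [blockPerm, permCongr_apply]

theorem sign_blockPerm (τ : Perm (Fin m)) (ε : Fin m → Perm (Fin 2)) :
    sign (blockPerm τ ε) = ∏ k, sign (ε k) := by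
  rw [blockPerm, sign_permCongr, Perm.sign_mul, sign_prodCongrLeft, sign_prodCongrRight,
    Fin.prod_univ_two, Int.units_mul_self, one_mul]

theorem blockPerm_injective :
    Function.Injective fun p : Perm (Fin m) × (Fin m → Perm (Fin 2)) => blockPerm p.1 p.2 := by
  rintro ⟨τ, ε⟩ ⟨τ', ε'⟩ h
  have hp : ∀ k b, (τ k, ε k b) = (τ' k, ε' k b) := fun k b =>
    (finPairEquiv m).injective (by simpa using DFunLike.congr_fun h (finPairEquiv m (k, b)))
  simp only [Prod.mk.injEq] at hp
  exact Prod.ext (Equiv.ext fun k => (hp k 0).1) (funext fun k => Equiv.ext fun b => (hp k b).2)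

section PfaffianTerm

variable {R : Type*} [CommRing R]

def pfaffianTerm (A : Matrix (Fin (2 * m)) (Fin (2 * m)) R) (σ : Perm (Fin (2 * m))) : R :=
  (sign σ : ℤ) * ∏ k : Fin m, A (σ (finPairEquiv m (k, 0))) (σ (finPairEquiv m (k, 1)))

theorem pfaffianTerm_mul_blockPerm {A : Matrix (Fin (2 * m)) (Fin (2 * m)) R}
    (hA : ∀ i j, A j i = -A i j) (ρ : Perm (Fin (2 * m))) (τ : Perm (Fin m))
    (ε : Fin m → Perm (Fin 2)) : pfaffianTerm A (ρ * blockPerm τ ε) = pfaffianTerm A ρ := by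
  set e := finPairEquiv m
  have hpair : ∀ k, A ((ρ * blockPerm τ ε) (e (k, 0))) ((ρ * blockPerm τ ε) (e (k, 1))) =
      (sign (ε k) : ℤ) * A (ρ (e (τ k, 0))) (ρ (e (τ k, 1))) := fun k => by
    simp only [Perm.mul_apply, e, blockPerm_apply]
    exact apply_fin_two_of_antisymm (fun b b' => A (ρ (e (τ k, b))) (ρ (e (τ k, b'))))
      (fun _ _ => hA _ _) (ε k)
  have hsq : (∏ k, ((sign (ε k) : ℤ) : R)) * ∏ k, ((sign (ε k) : ℤ) : R) = 1 := by
    rw [← prod_mul_distrib]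
    refine prod_eq_one fun k _ => ?_
    rw [← Int.cast_mul, ← Units.val_mul, Int.units_mul_self, Units.val_one, Int.cast_one]
  rw [pfaffianTerm, pfaffianTerm, prod_congr rfl fun k _ => hpair k, prod_mul_distrib,
    Equiv.prod_comp τ fun j => A (ρ (e (j, 0))) (ρ (e (j, 1))), Perm.sign_mul, sign_blockPerm]
  push_cast
  linear_combination (↑↑(sign ρ) * ∏ j, A (ρ (e (j, 0))) (ρ (e (j, 1)))) * hsq

/-- A nonzero term pairs each block `{2k, 2k + 1}` with two neighbours, so `σ` transports the
standard matching to a perfect matching of the path, which must be the standard one again. -/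
theorem fst_finPairEquiv_symm_eq_of_pfaffianTerm_ne_zero
    {A : Matrix (Fin (2 * m)) (Fin (2 * m)) R}
    (hA : ∀ i j, A i j ≠ 0 → (j : ℕ) = i + 1 ∨ (i : ℕ) = j + 1) {σ : Perm (Fin (2 * m))}
    (hσ : pfaffianTerm A σ ≠ 0) (k : Fin m) (b b' : Fin 2) :
    ((finPairEquiv m).symm (σ (finPairEquiv m (k, b)))).1 =
      ((finPairEquiv m).symm (σ (finPairEquiv m (k, b')))).1 := by
  set e := finPairEquiv m
  have hadj : ∀ k, (σ (e (k, 1)) : ℕ) = σ (e (k, 0)) + 1 ∨ (σ (e (k, 0)) : ℕ) = σ (e (k, 1)) + 1 :=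
    fun k => hA _ _ fun h0 => hσ (by rw [pfaffianTerm, prod_eq_zero (mem_univ k) h0, mul_zero])
  let π := σ * blockPerm 1 (fun _ => swap 0 1) * σ⁻¹
  have hπ : ∀ k b, π (σ (e (k, b))) = σ (e (k, swap 0 1 b)) := fun k b => by
    simp [π, e]
  have hsurj : ∀ x, ∃ k b, σ (e (k, b)) = x := fun x =>
    ⟨(e.symm (σ⁻¹ x)).1, (e.symm (σ⁻¹ x)).2, by simp⟩
  have hπ_inv : Function.Involutive π := fun x => by
    obtain ⟨k, b, rfl⟩ := hsurj x
    rw [hπ, hπ, swap_apply_self]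
  have hπ_adj : ∀ x, (π x : ℕ) = x + 1 ∨ (x : ℕ) = π x + 1 := fun x => by
    obtain ⟨k, b, rfl⟩ := hsurj x
    fin_cases b
    · simpa [hπ] using hadj k
    · simpa [hπ] using (hadj k).symm
  rcases (by decide : ∀ b b' : Fin 2, b' = b ∨ b' = swap 0 1 b) b b' with rfl | rfl
  · rfl
  · refine Fin.ext ?_
    rw [finPairEquiv_symm_apply_fst_val, finPairEquiv_symm_apply_fst_val, ← hπ]
    exact (Fin.div_two_eq_of_involutive_of_adjacent hπ_inv hπ_adj _).symm

theorem exists_blockPerm_eq_of_pfaffianTerm_ne_zero {A : Matrix (Fin (2 * m)) (Fin (2 * m)) R}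
    (hA : ∀ i j, A i j ≠ 0 → (j : ℕ) = i + 1 ∨ (i : ℕ) = j + 1) {σ : Perm (Fin (2 * m))}
    (hσ : pfaffianTerm A σ ≠ 0) : ∃ τ ε, blockPerm τ ε = σ := by
  obtain ⟨τ, ε, hτε⟩ := exists_eq_prodCongrLeft_mul_prodCongrRight
    ((finPairEquiv m).symm.permCongr σ)
    (by simpa [permCongr_apply] using fst_finPairEquiv_symm_eq_of_pfaffianTerm_ne_zero hA hσ)
  refine ⟨τ, ε, ?_⟩
  rw [blockPerm, ← hτε]
  ext x
  simp [permCongr_apply]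

end PfaffianTerm

theorem pfaffian_eq_mul_sum_pfaffianTerm (A : Matrix (Fin (2 * m)) (Fin (2 * m)) ℂ) :
    pfaffian m A = ((2 : ℂ) ^ m * (m.factorial : ℂ))⁻¹ * ∑ σ, pfaffianTerm A σ := by
  simp only [pfaffian, pfaffianTerm, finPairEquiv_mk_zero, finPairEquiv_mk_one]

theorem pfaffian_eq_prod_of_tridiagonal (A : Matrix (Fin (2 * m)) (Fin (2 * m)) ℂ)
    (hskew : ∀ i j, A j i = -A i j) (htri : ∀ i j, A i j ≠ 0 → (j : ℕ) = i + 1 ∨ (i : ℕ) = j + 1) :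
    pfaffian m A = ∏ k : Fin m, A (finPairEquiv m (k, 0)) (finPairEquiv m (k, 1)) := by
  have hsum : ∑ σ, pfaffianTerm A σ =
      ∑ _p : Perm (Fin m) × (Fin m → Perm (Fin 2)), pfaffianTerm A 1 :=
    (Fintype.sum_of_injective _ blockPerm_injective _ _
      (fun σ hσ => by_contra fun h => hσ <| by
        obtain ⟨τ, ε, rfl⟩ := exists_blockPerm_eq_of_pfaffianTerm_ne_zero htri h
        exact ⟨(τ, ε), rfl⟩)
      (fun p => by rw [← pfaffianTerm_mul_blockPerm hskew 1 p.1 p.2, one_mul])).symm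
  have hcard : Fintype.card (Perm (Fin m) × (Fin m → Perm (Fin 2))) = 2 ^ m * m.factorial := by
    simp [Fintype.card_perm, Nat.mul_comm]
  rw [pfaffian_eq_mul_sum_pfaffianTerm, hsum, sum_const, card_univ, hcard, nsmul_eq_mul]
  simp only [pfaffianTerm, Perm.sign_one, Units.val_one, Int.cast_one, one_mul, Perm.one_apply]
  push_cast
  exact inv_mul_cancel_left₀ (by simp [Nat.factorial_ne_zero]) _

end Blocks

/-- for a skew-symmetric tridiagonal `2n × 2n` matrix `B` with
superdiagonal entries `α` and any strictly increasing selection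
`μ : Fin (2m) → Fin (2n)` of rows/columns, the sub-Pfaffian `Pf(B^μ_μ)` vanishes
unless `μ_{2k} = μ_{2k-1} + 1` for all `k`, in which case it equals
`∏_k α_{μ_{2k-1}}`. -/
theorem subPfaffian_tridiagonal (n m : ℕ) (α : ℕ → ℂ)
    (B : Matrix (Fin (2 * n)) (Fin (2 * n)) ℂ)
    (hB : ∀ i j : Fin (2 * n), B i j =
      if (j : ℕ) = (i : ℕ) + 1 then α ((i : ℕ) + 1)
      else if (i : ℕ) = (j : ℕ) + 1 then -α ((j : ℕ) + 1)
      else 0)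
    (μ : Fin (2 * m) → Fin (2 * n)) (hμ : StrictMono μ) :
    ((∀ k : Fin m,
        (μ ⟨2 * (k : ℕ) + 1, by have := k.isLt; omega⟩ : ℕ) =
          (μ ⟨2 * (k : ℕ), by have := k.isLt; omega⟩ : ℕ) + 1) →
      pfaffian m (B.submatrix μ μ) =
        ∏ k : Fin m, α ((μ ⟨2 * (k : ℕ), by have := k.isLt; omega⟩ : ℕ) + 1)) ∧
    ((¬ ∀ k : Fin m,
        (μ ⟨2 * (k : ℕ) + 1, by have := k.isLt; omega⟩ : ℕ) =
          (μ ⟨2 * (k : ℕ), by have := k.isLt; omega⟩ : ℕ) + 1) →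
      pfaffian m (B.submatrix μ μ) = 0) := by
  have hskew : ∀ i j, B.submatrix μ μ j i = -B.submatrix μ μ i j := fun i j => by
    simp only [Matrix.submatrix_apply, hB]
    split_ifs <;> first | omega | ring
  have htri : ∀ i j, B.submatrix μ μ i j ≠ 0 → (j : ℕ) = i + 1 ∨ (i : ℕ) = j + 1 := fun i j h => by
    simp only [Matrix.submatrix_apply, hB] at h
    split_ifs at h with h₁ h₂
    · exact .inl (Fin.val_add_one_eq_of_strictMono hμ h₁)
    · exact .inr (Fin.val_add_one_eq_of_strictMono hμ h₂)
    · exact absurd rfl h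
  have hpair : ∀ k : Fin m, B.submatrix μ μ (finPairEquiv m (k, 0)) (finPairEquiv m (k, 1)) =
      if (μ ⟨2 * (k : ℕ) + 1, by omega⟩ : ℕ) = μ ⟨2 * (k : ℕ), by omega⟩ + 1 then
        α (μ ⟨2 * (k : ℕ), by omega⟩ + 1) else 0 := fun k => by
    have hlt : μ ⟨2 * (k : ℕ), by omega⟩ < μ ⟨2 * (k : ℕ) + 1, by omega⟩ :=
      hμ (Fin.lt_def.2 (by simp))
    rw [Fin.lt_def] at hlt
    simp only [Matrix.submatrix_apply, finPairEquiv_mk_zero, finPairEquiv_mk_one, hB]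
    split_ifs <;> first | rfl | omega
  rw [pfaffian_eq_prod_of_tridiagonal _ hskew htri]
  refine ⟨fun hcons => prod_congr rfl fun k _ => by rw [hpair, if_pos (hcons k)], fun hncons => ?_⟩
  obtain ⟨k, hk⟩ := not_forall.1 hncons
  exact prod_eq_zero (mem_univ k) (by rw [hpair, if_neg hk])
end
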